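/- arXiv:2103.00763 — 2 statements merged into one kernel-verified Lean document; each statement's English description precedes it below -/
import Mathlib

section
/- For each fixed nonnegative integer r, the function Ψ(μ₁, ..., μₙ) = ∏_{k=1}^n (1/r!) ∫_{μ_k}^∞ e^{-t} t^r dt is Schur-concave on (0, ∞)^n. -/
open MeasureTheory

/-- `x` majorizes `y`: for every `k`, the sum of the `k` largest entries of `x` is at
least the sum of any `k` entries of `y` (equivalently, of the `k` largest entries of `y`),
and the total sums are equal. -/
def Majorizes {n : ℕ} (x y : Fin n → ℝ) : Prop :=
  (∀ s : Finset (Fin n), ∃ t : Finset (Fin n),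
      t.card = s.card ∧ ∑ i ∈ s, y i ≤ ∑ i ∈ t, x i) ∧
  ∑ i, x i = ∑ i, y i

/-!
Karamata's inequality reduces Schur-concavity of `∑ₖ g (μₖ)` to concavity of `g`, so it suffices
that `G(a) = ∫_a^∞ e^{-t} t^r dt` is log-concave on `(0, ∞)`. The derivative of `log G` is
`-f/G` with `f(t) = e^{-t} t^r`, and `G(a)/f(a) = ∫_0^∞ e^{-s} (1 + s/a)^r ds` decreases in `a`.
Karamata's inequality itself follows from the tangent bound `g x ≤ g y + g' y * (x - y)`, applied
to the increasingly sorted vectors, and Abel summation against the partial sums of `x - y`.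
-/

open Finset Set Real

namespace Finset

variable {ι R : Type*} [LinearOrder ι] [CommRing R] [PartialOrder R] [IsOrderedRing R]

theorem sum_mul_nonpos_of_antitone_of_nonneg {s : Finset ι} {c d : ι → R} (hc : Antitone c)
    (hc0 : ∀ i ∈ s, 0 ≤ c i) (hpre : ∀ j, ∑ i ∈ s with i < j, d i ≤ 0)
    (htot : ∑ i ∈ s, d i ≤ 0) : ∑ i ∈ s, c i * d i ≤ 0 := by
  classical
  induction s using Finset.induction_on_max generalizing c with
  | empty => simp
  | insert a s hlt ih =>
    have ha : a ∉ s := fun h => lt_irrefl a (hlt a h)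
    have hprefix : ∀ j, ∑ i ∈ s with i < j, d i ≤ 0 := by
      intro j
      rcases le_or_gt j a with hja | haj
      · simpa [filter_insert, hja.not_gt] using hpre j
      · have := hpre a
        rwa [filter_insert, if_neg (lt_irrefl a), filter_true_of_mem hlt,
          ← filter_true_of_mem fun i hi => (hlt i hi).trans haj] at this
    have hsplit : ∑ i ∈ insert a s, c i * d i =
        ∑ i ∈ s, (c i - c a) * d i + c a * ∑ i ∈ insert a s, d i := by
      simp only [sum_insert ha, sub_mul, sum_sub_distrib, mul_add, mul_sum]
      ring
    rw [hsplit]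
    have hshift : ∑ i ∈ s, (c i - c a) * d i ≤ 0 :=
      ih (fun i j hij => sub_le_sub_right (hc hij) _)
        (fun i hi => sub_nonneg.mpr (hc (hlt i hi).le)) hprefix
        (by simpa [filter_true_of_mem hlt] using hprefix a)
    exact add_nonpos hshift (mul_nonpos_of_nonneg_of_nonpos (hc0 a (mem_insert_self a s)) htot)

theorem sum_mul_nonpos_of_antitone {s : Finset ι} {c d : ι → R} (hc : Antitone c)
    (hpre : ∀ j, ∑ i ∈ s with i < j, d i ≤ 0) (htot : ∑ i ∈ s, d i = 0) :
    ∑ i ∈ s, c i * d i ≤ 0 := by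
  obtain rfl | hs := s.eq_empty_or_nonempty
  · simp
  -- shifting `c` by a constant does not change the sum, as `d` sums to zero
  have key := sum_mul_nonpos_of_antitone_of_nonneg (c := fun i => c i - c (s.max' hs))
    (fun i j hij => sub_le_sub_right (hc hij) _)
    (fun i hi => sub_nonneg.mpr (hc (s.le_max' i hi))) hpre htot.le
  simpa [sub_mul, sum_sub_distrib, ← mul_sum, htot] using key

end Finset

theorem Monotone.sum_filter_lt_le_sum {ι M : Type*} [LinearOrder ι] [Fintype ι] [AddCommGroup M]
    [PartialOrder M] [IsOrderedAddMonoid M] {u : ι → M} (hu : Monotone u) {s : Finset ι} {j : ι}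
    (hs : #s = #{i | i < j}) : ∑ i with i < j, u i ≤ ∑ i ∈ s, u i := by
  classical
  set B : Finset ι := {i | i < j}
  have hout : ∑ i ∈ B \ s, u i ≤ ∑ i ∈ s \ B, u i := calc
    ∑ i ∈ B \ s, u i ≤ #(B \ s) • u j :=
      sum_le_card_nsmul _ _ _ fun i hi => hu (mem_filter.mp (mem_sdiff.mp hi).1).2.le
    _ = #(s \ B) • u j := by rw [card_sdiff_comm hs.symm]
    _ ≤ ∑ i ∈ s \ B, u i := card_nsmul_le_sum _ _ _ fun i hi =>
      hu (not_lt.mp fun h => (mem_sdiff.mp hi).2 (mem_filter.mpr ⟨mem_univ i, h⟩))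
  rw [← sum_inter_add_sum_sdiff B s, ← sum_inter_add_sum_sdiff s B, Finset.inter_comm]
  exact add_le_add_right hout _

theorem ConcaveOn.le_add_deriv_mul_sub {s : Set ℝ} {g : ℝ → ℝ} (hg : ConcaveOn ℝ s g) {a b : ℝ}
    (ha : a ∈ s) (hb : b ∈ s) (hd : DifferentiableAt ℝ g a) :
    g b ≤ g a + deriv g a * (b - a) := by
  rcases lt_trichotomy a b with hab | rfl | hab
  · have := hg.slope_le_deriv ha hb hab hd
    rw [slope_def_field, div_le_iff₀ (sub_pos.2 hab)] at this
    linarith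
  · simp
  · have := hg.deriv_le_slope hb ha hab hd
    rw [slope_def_field, le_div_iff₀ (sub_pos.2 hab)] at this
    linarith

namespace Majorizes

variable {n : ℕ} {x y : Fin n → ℝ}

theorem sum_filter_lt_sort_le (h : Majorizes x y) (j : Fin n) :
    ∑ i with i < j, x (Tuple.sort x i) ≤ ∑ i with i < j, y (Tuple.sort y i) := by
  set σ := Tuple.sort x
  set τ := Tuple.sort y
  set B : Finset (Fin n) := {i | i < j}
  have hB : #B = j := by simp [B, filter_gt_eq_Iio]
  obtain ⟨t, ht, hle⟩ := h.1 (Bᶜ.map τ.toEmbedding)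
  have htc : #(tᶜ.map σ.symm.toEmbedding) = #B := by
    simp only [card_map, card_compl, ht, Fintype.card_fin, hB]
    omega
  have hy : ∑ i, y i = ∑ i, y (τ i) := (Equiv.sum_comp τ y).symm
  calc ∑ i ∈ B, x (σ i) ≤ ∑ i ∈ tᶜ.map σ.symm.toEmbedding, x (σ i) :=
        (Tuple.monotone_sort x).sum_filter_lt_le_sum htc
    _ = ∑ i, x i - ∑ i ∈ t, x i := by simp [sum_map, ← sum_compl_add_sum t]
    _ ≤ ∑ i, y (τ i) - ∑ i ∈ Bᶜ, y (τ i) := by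
        rw [sum_map] at hle
        rw [h.2, hy]
        exact sub_le_sub_left hle _
    _ = ∑ i ∈ B, y (τ i) := by rw [← sum_compl_add_sum B]; ring

theorem sum_le_sum_of_concaveOn {s : Set ℝ} {g : ℝ → ℝ} (h : Majorizes x y)
    (hg : ConcaveOn ℝ s g) (hgd : ∀ a ∈ s, DifferentiableAt ℝ g a) (hx : ∀ i, x i ∈ s)
    (hy : ∀ i, y i ∈ s) : ∑ i, g (x i) ≤ ∑ i, g (y i) := by
  set σ := Tuple.sort x
  set τ := Tuple.sort y
  have htangent : ∀ i, g (x (σ i)) - g (y (τ i)) ≤ deriv g (y (τ i)) * (x (σ i) - y (τ i)) :=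
    fun i => by linarith [hg.le_add_deriv_mul_sub (hy (τ i)) (hx (σ i)) (hgd _ (hy (τ i)))]
  have habel : ∑ i, deriv g (y (τ i)) * (x (σ i) - y (τ i)) ≤ 0 := by
    refine sum_mul_nonpos_of_antitone
      (fun i j hij => hg.antitoneOn_deriv hgd (hy _) (hy _) (Tuple.monotone_sort y hij))
      (fun j => ?_) ?_
    · simpa [sum_sub_distrib] using h.sum_filter_lt_sort_le j
    · rw [sum_sub_distrib, Equiv.sum_comp σ x, Equiv.sum_comp τ y, h.2, sub_self]
  rw [← Equiv.sum_comp σ (fun i => g (x i)), ← Equiv.sum_comp τ (fun i => g (y i)),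
    ← sub_nonpos, ← sum_sub_distrib]
  exact (sum_le_sum fun i _ => htangent i).trans habel

end Majorizes

theorem integrableOn_exp_neg_mul_pow_Ioi (r : ℕ) {a : ℝ} (ha : 0 ≤ a) :
    IntegrableOn (fun t => exp (-t) * t ^ r) (Ioi a) := by
  have h := GammaIntegral_convergent (s := r + 1) (by positivity)
  simp only [add_sub_cancel_right, rpow_natCast] at h
  exact h.mono_set (Ioi_subset_Ioi ha)

theorem exp_neg_add_mul_add_pow (r : ℕ) {a : ℝ} (ha : a ≠ 0) (s : ℝ) :
    exp (-(a + s)) * (a + s) ^ r = exp (-a) * a ^ r * (exp (-s) * (1 + s / a) ^ r) := by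
  rw [neg_add, exp_add, show a + s = a * (1 + s / a) by field_simp, mul_pow]
  ring

theorem integrableOn_exp_neg_add_mul_add_pow (r : ℕ) {a : ℝ} (ha : 0 ≤ a) :
    IntegrableOn (fun s => exp (-(a + s)) * (a + s) ^ r) (Ioi 0) := by
  refine ((measurePreserving_add_left volume a).integrableOn_image
    (measurableEmbedding_addLeft a) (f := fun t => exp (-t) * t ^ r)).mp ?_
  rw [image_const_add_Ioi, add_zero]
  exact integrableOn_exp_neg_mul_pow_Ioi r ha

theorem integrableOn_exp_neg_mul_one_add_div_pow (r : ℕ) {a : ℝ} (ha : 0 < a) :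
    IntegrableOn (fun s => exp (-s) * (1 + s / a) ^ r) (Ioi 0) := by
  have hc : exp (-a) * a ^ r ≠ 0 := by positivity
  refine IntegrableOn.congr_fun
    ((integrableOn_exp_neg_add_mul_add_pow r ha.le).const_mul (exp (-a) * a ^ r)⁻¹)
    (fun s _ => ?_) measurableSet_Ioi
  rw [exp_neg_add_mul_add_pow r ha.ne', inv_mul_cancel_left₀ hc]

/-- `gammaTail r a = r! · P(Poisson(a) ≤ r)`. -/
noncomputable def gammaTail (r : ℕ) (a : ℝ) : ℝ := ∫ t in Ioi a, exp (-t) * t ^ r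

namespace gammaTail

variable (r : ℕ) {a : ℝ}

theorem pos (ha : 0 ≤ a) : 0 < gammaTail r a := by
  have hpos : ∀ t ∈ Ioi a, 0 < exp (-t) * t ^ r := fun t ht =>
    mul_pos (exp_pos _) (pow_pos (ha.trans_lt ht) r)
  have hsupp : Ioi a ⊆ Function.support fun t => exp (-t) * t ^ r := fun t ht => (hpos t ht).ne'
  rw [gammaTail, setIntegral_pos_iff_support_of_nonneg_ae
    ((ae_restrict_iff' measurableSet_Ioi).mpr (.of_forall fun t ht => (hpos t ht).le))
    (integrableOn_exp_neg_mul_pow_Ioi r ha), inter_eq_self_of_subset_right hsupp, volume_Ioi]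
  exact ENNReal.zero_lt_top

theorem hasDerivAt (a : ℝ) : HasDerivAt (gammaTail r) (-(exp (-a) * a ^ r)) a := by
  have hcont : Continuous fun t : ℝ => exp (-t) * t ^ r := by fun_prop
  have hsplit : gammaTail r = fun u => (∫ t in u..1, exp (-t) * t ^ r) + gammaTail r 1 := by
    funext u
    exact (intervalIntegral.integral_interval_add_Ioi' (hcont.intervalIntegrable u 1)
      (integrableOn_exp_neg_mul_pow_Ioi r zero_le_one)).symm
  rw [hsplit]
  exact (intervalIntegral.integral_hasDerivAt_left (hcont.intervalIntegrable a 1)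
    (hcont.stronglyMeasurableAtFilter _ _) hcont.continuousAt).add_const _

theorem eq_integral_comp_add (a : ℝ) :
    gammaTail r a = ∫ s in Ioi 0, exp (-(a + s)) * (a + s) ^ r := by
  have h := (measurePreserving_add_left volume a).setIntegral_image_emb
    (measurableEmbedding_addLeft a) (fun t => exp (-t) * t ^ r) (Ioi 0)
  rwa [image_const_add_Ioi, add_zero] at h

theorem div_eq_integral (ha : 0 < a) :
    gammaTail r a / (exp (-a) * a ^ r) = ∫ s in Ioi 0, exp (-s) * (1 + s / a) ^ r := by
  rw [eq_integral_comp_add, div_eq_iff (by positivity), mul_comm, ← integral_const_mul]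
  simp_rw [exp_neg_add_mul_add_pow r ha.ne']

theorem antitoneOn_div : AntitoneOn (fun a => gammaTail r a / (exp (-a) * a ^ r)) (Ioi 0) := by
  intro a (ha : 0 < a) b (hb : 0 < b) hab
  simp only [div_eq_integral r ha, div_eq_integral r hb]
  refine integral_mono_of_nonneg ((ae_restrict_iff' measurableSet_Ioi).mpr
    (.of_forall fun s (hs : 0 < s) => ?_)) (integrableOn_exp_neg_mul_one_add_div_pow r ha)
    ((ae_restrict_iff' measurableSet_Ioi).mpr (.of_forall fun s (hs : 0 < s) => ?_))
  · dsimp only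
    positivity
  · dsimp only
    gcongr exp (-s) * (1 + ?_) ^ r
    exact div_le_div_of_nonneg_left hs.le ha hab

theorem hasDerivAt_log (ha : 0 < a) : HasDerivAt (fun a => log (gammaTail r a))
    (-(gammaTail r a / (exp (-a) * a ^ r))⁻¹) a := by
  rw [inv_div, ← neg_div]
  exact (hasDerivAt r a).log (pos r ha.le).ne'

theorem concaveOn_log : ConcaveOn ℝ (Ioi 0) fun a => log (gammaTail r a) := by
  have hd : ∀ a ∈ Ioi (0 : ℝ), DifferentiableAt ℝ (fun a => log (gammaTail r a)) a :=
    fun a ha => (hasDerivAt_log r ha).differentiableAt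
  refine AntitoneOn.concaveOn_of_deriv (convex_Ioi 0)
    (fun a ha => (hd a ha).continuousAt.continuousWithinAt)
    (by rw [interior_Ioi]; exact fun a ha => (hd a ha).differentiableWithinAt) ?_
  rw [interior_Ioi]
  intro a (ha : 0 < a) b (hb : 0 < b) hab
  rw [(hasDerivAt_log r ha).deriv, (hasDerivAt_log r hb).deriv, neg_le_neg_iff]
  exact inv_anti₀ (div_pos (pos r hb.le) (by positivity)) (antitoneOn_div r ha hb hab)

end gammaTail

theorem poisson_max_cdf_schur_concave (n r : ℕ) (x y : Fin n → ℝ)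
    (hx : ∀ i, 0 < x i) (hy : ∀ i, 0 < y i) (hmaj : Majorizes x y) :
    ∏ k, ((1 / (r.factorial : ℝ)) * ∫ t in Set.Ioi (x k), Real.exp (-t) * t ^ r)
      ≤ ∏ k, ((1 / (r.factorial : ℝ)) * ∫ t in Set.Ioi (y k), Real.exp (-t) * t ^ r) := by
  have hsum : ∑ k, log (gammaTail r (x k)) ≤ ∑ k, log (gammaTail r (y k)) :=
    hmaj.sum_le_sum_of_concaveOn (gammaTail.concaveOn_log r)
      (fun a ha => (gammaTail.hasDerivAt_log r ha).differentiableAt) hx hy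
  have hprod : ∏ k, gammaTail r (x k) ≤ ∏ k, gammaTail r (y k) := by
    have hpos (z : Fin n → ℝ) (hz : ∀ i, 0 < z i) (k : Fin n) : 0 < gammaTail r (z k) :=
      gammaTail.pos r (hz k).le
    rwa [← log_le_log_iff (prod_pos fun k _ => hpos x hx k) (prod_pos fun k _ => hpos y hy k),
      log_prod fun k _ => (hpos x hx k).ne', log_prod fun k _ => (hpos y hy k).ne']
  change ∏ k, (1 / (r.factorial : ℝ)) * gammaTail r (x k) ≤
    ∏ k, (1 / (r.factorial : ℝ)) * gammaTail r (y k)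
  rw [prod_mul_distrib, prod_mul_distrib]
  exact mul_le_mul_of_nonneg_left hprod (by positivity)
end

section
/- For each fixed nonnegative integer u, the function Ψ₂(q₁, ..., qₙ) = ∏_{k=1}^n (1 - q_k^{u+1}) is Schur-concave on (0, 1)^n. -/
open Finset

theorem Finset.sum_le_sum_of_card_eq_of_forall_le {ι κ M : Type*} [AddCommMonoid M] [LinearOrder M]
    [IsOrderedAddMonoid M] {s : Finset ι} {t : Finset κ} {f : ι → M} {g : κ → M}
    (hst : #s = #t) (h : ∀ i ∈ s, ∀ j ∈ t, f i ≤ g j) : ∑ i ∈ s, f i ≤ ∑ j ∈ t, g j := by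
  rcases t.eq_empty_or_nonempty with rfl | ht
  · simp_all
  calc ∑ i ∈ s, f i ≤ #s • t.inf' ht g :=
        sum_le_card_nsmul _ _ _ fun i hi => le_inf' ht _ fun j hj => h i hi j hj
    _ = #t • t.inf' ht g := by rw [hst]
    _ ≤ ∑ j ∈ t, g j := card_nsmul_le_sum _ _ _ fun j hj => inf'_le _ hj

theorem Antitone.sum_le_sum_of_isLowerSet {α M : Type*} [LinearOrder α] [AddCommGroup M]
    [LinearOrder M] [IsOrderedAddMonoid M] {X : α → M} (hX : Antitone X) {s t : Finset α}
    (hs : IsLowerSet (s : Set α)) (hts : #t = #s) : ∑ i ∈ t, X i ≤ ∑ i ∈ s, X i := by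
  rw [← sub_nonneg, ← sum_sdiff_sub_sum_sdiff, sub_nonneg]
  refine sum_le_sum_of_card_eq_of_forall_le (card_sdiff_comm hts) fun i hi j hj => hX ?_
  by_contra! hij
  exact (mem_sdiff.1 hi).2 (hs hij.le (mem_sdiff.1 hj).1)

theorem exists_perm_antitone {α : Type*} [LinearOrder α] {n : ℕ} (x : Fin n → α) :
    ∃ σ : Equiv.Perm (Fin n), Antitone (x ∘ σ) :=
  ⟨Tuple.sort (OrderDual.toDual ∘ x), Tuple.monotone_sort (OrderDual.toDual ∘ x)⟩

namespace Majorizes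

variable {n : ℕ} {x y : Fin n → ℝ}

theorem comp_perm (h : Majorizes x y) (σ τ : Equiv.Perm (Fin n)) : Majorizes (x ∘ σ) (y ∘ τ) := by
  refine ⟨fun s => ?_, by simp only [Function.comp_apply, Equiv.sum_comp, h.2]⟩
  obtain ⟨t, hcard, hle⟩ := h.1 (s.map τ.toEmbedding)
  refine ⟨t.map σ.symm.toEmbedding, by simpa using hcard, ?_⟩
  simpa [sum_map] using hle

theorem sum_lt_le_sum_lt (h : Majorizes x y) (hx : Antitone x) (k : ℕ) :
    ∑ i ∈ {i : Fin n | ↑i < k}, y i ≤ ∑ i ∈ {i : Fin n | ↑i < k}, x i := by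
  obtain ⟨t, hcard, hle⟩ := h.1 {i | ↑i < k}
  refine hle.trans (hx.sum_le_sum_of_isLowerSet (fun i j hji hj => ?_) hcard)
  simp only [coe_filter, mem_univ, true_and, Set.mem_ofPred_eq] at hj ⊢
  exact lt_of_le_of_lt hji hj

end Majorizes

theorem Fin.sum_mul_le_mul_sum_of_monotone {n : ℕ} {c e : Fin n → ℝ} (hc : Monotone c)
    (he : ∀ k : ℕ, 0 ≤ ∑ i ∈ {i : Fin n | ↑i < k}, e i) {b : ℝ} (hb : ∀ i, c i ≤ b) :
    ∑ i, c i * e i ≤ b * ∑ i, e i := by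
  induction n generalizing b with
  | zero => simp
  | succ n ih =>
    have he' : ∀ k : ℕ, 0 ≤ ∑ i ∈ {i : Fin n | ↑i < k}, e i.castSucc := by
      intro k
      convert he (min k n) using 1
      simp [sum_filter, Fin.sum_univ_castSucc]
    have hsum : 0 ≤ ∑ i, e i := by simpa [Fin.is_le] using he (n + 1)
    calc ∑ i, c i * e i
        = ∑ i : Fin n, c i.castSucc * e i.castSucc + c (last n) * e (last n) :=
          Fin.sum_univ_castSucc _
      _ ≤ c (last n) * ∑ i : Fin n, e i.castSucc + c (last n) * e (last n) := by
          gcongr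
          exact ih (hc.comp Fin.strictMono_castSucc.monotone) he' fun i => hc (Fin.le_last _)
      _ = c (last n) * ∑ i, e i := by rw [Fin.sum_univ_castSucc, mul_add]
      _ ≤ b * ∑ i, e i := mul_le_mul_of_nonneg_right (hb _) hsum

namespace ConcaveOn

variable {S : Set ℝ} {f : ℝ → ℝ} {n : ℕ} {x y : Fin n → ℝ}

theorem le_add_deriv_mul_sub_s12 {a b : ℝ} (hf : ConcaveOn ℝ S f) (ha : a ∈ S) (hb : b ∈ S)
    (hfb : DifferentiableAt ℝ f b) : f a ≤ f b + deriv f b * (a - b) := by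
  rcases lt_trichotomy a b with hab | rfl | hab
  · have := hf.deriv_le_slope ha hb hab hfb
    rw [slope_def_field, le_div_iff₀ (sub_pos.2 hab)] at this
    linarith
  · simp
  · have := hf.slope_le_deriv hb ha hab hfb
    rw [slope_def_field, div_le_iff₀ (sub_pos.2 hab)] at this
    linarith

theorem sum_le_sum_of_majorizes_of_antitone (hf : ConcaveOn ℝ S f)
    (hfd : ∀ t ∈ S, DifferentiableAt ℝ f t) (hx : ∀ i, x i ∈ S) (hy : ∀ i, y i ∈ S)
    (hxa : Antitone x) (hya : Antitone y) (h : Majorizes x y) :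
    ∑ i, f (x i) ≤ ∑ i, f (y i) := by
  obtain ⟨b, hb⟩ := (Set.finite_range fun i => deriv f (y i)).bddAbove
  have hslope : ∑ i, deriv f (y i) * (x i - y i) ≤ 0 := by
    have hmono : Monotone fun i => deriv f (y i) := fun i j hij =>
      hf.antitoneOn_deriv hfd (hy j) (hy i) (hya hij)
    have hprefix : ∀ k : ℕ, 0 ≤ ∑ i ∈ {i : Fin n | ↑i < k}, (x i - y i) := fun k => by
      rw [sum_sub_distrib, sub_nonneg]
      exact h.sum_lt_le_sum_lt hxa k
    simpa [sum_sub_distrib, h.2] using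
      Fin.sum_mul_le_mul_sum_of_monotone hmono hprefix fun i => hb ⟨i, rfl⟩
  calc ∑ i, f (x i) ≤ ∑ i, (f (y i) + deriv f (y i) * (x i - y i)) :=
        sum_le_sum fun i _ => hf.le_add_deriv_mul_sub_s12 (hx i) (hy i) (hfd _ (hy i))
    _ ≤ ∑ i, f (y i) := by rw [sum_add_distrib]; linarith

/-- **Karamata's inequality** for differentiable concave functions. -/
theorem sum_le_sum_of_majorizes (hf : ConcaveOn ℝ S f) (hfd : ∀ t ∈ S, DifferentiableAt ℝ f t)
    (hx : ∀ i, x i ∈ S) (hy : ∀ i, y i ∈ S) (h : Majorizes x y) :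
    ∑ i, f (x i) ≤ ∑ i, f (y i) := by
  obtain ⟨σ, hσ⟩ := exists_perm_antitone x
  obtain ⟨τ, hτ⟩ := exists_perm_antitone y
  calc ∑ i, f (x i) = ∑ i, f (x (σ i)) := (Equiv.sum_comp σ fun i => f (x i)).symm
    _ ≤ ∑ i, f (y (τ i)) := hf.sum_le_sum_of_majorizes_of_antitone hfd (fun i => hx (σ i))
          (fun i => hy (τ i)) hσ hτ (h.comp_perm σ τ)
    _ = ∑ i, f (y i) := Equiv.sum_comp τ fun i => f (y i)

end ConcaveOn

theorem concaveOn_log_one_sub_pow {m : ℕ} (hm : m ≠ 0) :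
    ConcaveOn ℝ (Set.Ico 0 1) fun t => Real.log (1 - t ^ m) := by
  have hpos : ∀ t ∈ Set.Ico (0 : ℝ) 1, 0 < 1 - t ^ m := fun t ht =>
    sub_pos.2 (pow_lt_one₀ ht.1 ht.2 hm)
  refine ⟨convex_Ico 0 1, fun s hs t ht a b ha hb hab => ?_⟩
  calc a • Real.log (1 - s ^ m) + b • Real.log (1 - t ^ m)
      ≤ Real.log (a • (1 - s ^ m) + b • (1 - t ^ m)) :=
        strictConcaveOn_log_Ioi.concaveOn.2 (hpos s hs) (hpos t ht) ha hb hab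
    _ ≤ Real.log (1 - (a • s + b • t) ^ m) := by
        refine Real.log_le_log (convex_Ioi (0 : ℝ) (hpos s hs) (hpos t ht) ha hb hab) ?_
        have := (convexOn_pow m).2 hs.1 ht.1 ha hb hab
        simp only [smul_eq_mul] at this ⊢
        linear_combination this + hab

theorem geometric_max_cdf_schur_concave (n u : ℕ) (q q' : Fin n → ℝ)
    (hq : ∀ i, q i ∈ Set.Ioo (0 : ℝ) 1) (hq' : ∀ i, q' i ∈ Set.Ioo (0 : ℝ) 1)
    (hmaj : Majorizes q q') :
    ∏ k, (1 - q k ^ (u + 1)) ≤ ∏ k, (1 - q' k ^ (u + 1)) := by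
  have hpos : ∀ t ∈ Set.Ico (0 : ℝ) 1, 0 < 1 - t ^ (u + 1) := fun t ht =>
    sub_pos.2 (pow_lt_one₀ ht.1 ht.2 u.succ_ne_zero)
  have hq₀ : ∀ i, q i ∈ Set.Ico (0 : ℝ) 1 := fun i => Set.Ioo_subset_Ico_self (hq i)
  have hq₀' : ∀ i, q' i ∈ Set.Ico (0 : ℝ) 1 := fun i => Set.Ioo_subset_Ico_self (hq' i)
  have hlog : ∑ k, Real.log (1 - q k ^ (u + 1)) ≤ ∑ k, Real.log (1 - q' k ^ (u + 1)) :=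
    (concaveOn_log_one_sub_pow u.succ_ne_zero).sum_le_sum_of_majorizes
      (fun t ht => ((differentiableAt_id.pow _).const_sub 1).log (hpos t ht).ne') hq₀ hq₀' hmaj
  rwa [← Real.log_prod fun i _ => (hpos _ (hq₀ i)).ne',
    ← Real.log_prod fun i _ => (hpos _ (hq₀' i)).ne',
    Real.log_le_log_iff (prod_pos fun i _ => hpos _ (hq₀ i))
      (prod_pos fun i _ => hpos _ (hq₀' i))] at hlog
end
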